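/- Combined map-based witness: let E_{t₁}, E_{t₂} be CPT maps on C^d, χ_{t} = (E_t ⊗ id)(|Ψ⁺⟩⟨Ψ⁺|) their Choi states with |Ψ⁺⟩ maximally entangled, and define Δ(t₁,t₂) = max{0, √(2/(d²(d²−1))) · max{‖χ_{t₂}^{T₁}‖₁ − 1, ‖χ_{t₂}^{T₂}‖₁ − 1} − √(2(1 − tr((tr₂ χ_{t₁})²)))}. If Δ(t₁,t₂) > 0 then (E_{t₁}, E_{t₂}) is not realizable with classical memory. -/

import Mathlib

open Matrix
open scoped Kronecker Classical ComplexOrder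

noncomputable section

/-- A density matrix: positive semidefinite with unit trace. -/
def IsDensity {N : Type*} [Fintype N] (ρ : Matrix N N ℂ) : Prop :=
  ρ.PosSemidef ∧ ρ.trace = 1

/-- Outer product `|ψ⟩⟨ψ|`. -/
def outer {N : Type*} (ψ : N → ℂ) : Matrix N N ℂ :=
  Matrix.of fun i j => ψ i * star (ψ j)

/-- Squared norm of a vector. -/
def vnormSq {N : Type*} [Fintype N] (ψ : N → ℂ) : ℝ := ∑ x, ‖ψ x‖ ^ 2

/-- Partial transpose with respect to the first tensor factor. -/
def pt₁ {m n : Type*} (ρ : Matrix (m × n) (m × n) ℂ) : Matrix (m × n) (m × n) ℂ :=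
  Matrix.of fun p q => ρ (q.1, p.2) (p.1, q.2)

/-- Partial transpose with respect to the second tensor factor. -/
def pt₂ {m n : Type*} (ρ : Matrix (m × n) (m × n) ℂ) : Matrix (m × n) (m × n) ℂ :=
  Matrix.of fun p q => ρ (p.1, q.2) (q.1, p.2)

/-- Partial trace over the first tensor factor. -/
def ptr₁ {m n : Type*} [Fintype m] (ρ : Matrix (m × n) (m × n) ℂ) : Matrix n n ℂ :=
  Matrix.of fun j l => ∑ i, ρ (i, j) (i, l)

/-- Partial trace over the second tensor factor. -/
def ptr₂ {m n : Type*} [Fintype n] (ρ : Matrix (m × n) (m × n) ℂ) : Matrix m m ℂ :=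
  Matrix.of fun i k => ∑ j, ρ (i, j) (k, j)

/-- Square root of a positive semidefinite matrix (as `Matrix.PosSemidef.sqrt` in the older Mathlib). -/
def Matrix.PosSemidef.sqrt {n 𝕜 : Type*} [Fintype n] [RCLike 𝕜] [DecidableEq n] {A : Matrix n n 𝕜}
    (hA : A.PosSemidef) : Matrix n n 𝕜 :=
  hA.1.eigenvectorUnitary.1 * diagonal ((↑) ∘ (√·) ∘ hA.1.eigenvalues) *
    (star hA.1.eigenvectorUnitary : Matrix n n 𝕜)

/-- Trace norm (sum of singular values): `‖A‖₁ = tr √(AᴴA)`. -/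
def traceNorm {N : Type*} [Fintype N] [DecidableEq N] (A : Matrix N N ℂ) : ℝ :=
  ((Matrix.posSemidef_conjTranspose_mul_self A).sqrt.trace).re

/-- Purity `tr ρ²` (real part). -/
def purity {N : Type*} [Fintype N] (ρ : Matrix N N ℂ) : ℝ := ((ρ * ρ).trace).re

/-- Separability of a bipartite density matrix. -/
def Separable {m n : Type*} [Fintype m] [Fintype n]
    (ρ : Matrix (m × n) (m × n) ℂ) : Prop :=
  ∃ (k : ℕ) (p : Fin k → ℝ) (σ : Fin k → Matrix m m ℂ) (τ : Fin k → Matrix n n ℂ),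
    (∀ i, 0 ≤ p i) ∧ (∑ i, p i = 1) ∧ (∀ i, IsDensity (σ i)) ∧ (∀ i, IsDensity (τ i)) ∧
    ρ = ∑ i, (p i : ℂ) • (σ i ⊗ₖ τ i)

/-- Extension `E ⊗ id` of a map on the first factor to a bipartite space. -/
def tensExtA {s n : Type*} (E : Matrix s s ℂ → Matrix s s ℂ)
    (X : Matrix (s × n) (s × n) ℂ) : Matrix (s × n) (s × n) ℂ :=
  Matrix.of fun p q => E (Matrix.of fun i k => X (i, p.2) (k, q.2)) p.1 q.1

/-- Extension `id ⊗ A` of a map on the second factor to a bipartite space. -/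
def tensExtSys {e s : Type*} (A : Matrix s s ℂ → Matrix s s ℂ)
    (X : Matrix (e × s) (e × s) ℂ) : Matrix (e × s) (e × s) ℂ :=
  Matrix.of fun p q => A (Matrix.of fun i k => X (p.1, i) (q.1, k)) p.2 q.2

/-- Complete positivity: `E ⊗ id_n` maps PSD matrices to PSD matrices for every `n`. -/
def IsCP {s : Type*} [Fintype s] (E : Matrix s s ℂ → Matrix s s ℂ) : Prop :=
  ∀ (n : ℕ) (X : Matrix (s × Fin n) (s × Fin n) ℂ), X.PosSemidef → (tensExtA E X).PosSemidef

/-- Trace preservation. -/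
def IsTP {s : Type*} [Fintype s] (E : Matrix s s ℂ → Matrix s s ℂ) : Prop :=
  ∀ X, (E X).trace = X.trace

/-- The maximally entangled unit vector `|Ψ⁺⟩ = (1/√d) Σᵢ |i⟩⊗|i⟩`. -/
def maxEntVec (d : ℕ) : Fin d × Fin d → ℂ :=
  fun p => if p.1 = p.2 then (((Real.sqrt d)⁻¹ : ℝ) : ℂ) else 0

/-- The Choi state `χ[E] = (E ⊗ id)(|Ψ⁺⟩⟨Ψ⁺|)` of a map `E`. -/
def ChoiMap {d : ℕ} (E : Matrix (Fin d) (Fin d) ℂ → Matrix (Fin d) (Fin d) ℂ) :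
    Matrix (Fin d × Fin d) (Fin d × Fin d) ℂ :=
  tensExtA E (outer (maxEntVec d))

/-- Choi state of a single-intervention process tensor `T`, viewed as a function of the
initial system state and the intervention (a CP map). The first index pair is the first
time segment (intervention input leg, initial state leg), the second pair is the second
time segment (final state leg, intervention output leg). It is obtained by letting `T`
act on halves of maximally entangled pairs, i.e. on matrix units with `1/d` weights. -/
def ChoiPT {d : ℕ}
    (T : Matrix (Fin d) (Fin d) ℂ →
      (Matrix (Fin d) (Fin d) ℂ → Matrix (Fin d) (Fin d) ℂ) → Matrix (Fin d) (Fin d) ℂ) :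
    Matrix ((Fin d × Fin d) × (Fin d × Fin d)) ((Fin d × Fin d) × (Fin d × Fin d)) ℂ :=
  Matrix.of fun p q => (d : ℂ)⁻¹ * (d : ℂ)⁻¹ *
    (T (Matrix.single p.1.2 q.1.2 1)
       (fun ρ => ρ p.1.1 q.1.1 • Matrix.single p.2.2 q.2.2 1)) p.2.1 q.2.1

/-- A single-intervention process tensor has classical memory if it is a composition of
conditioned instruments: `T[ρ, A] = Σᵢ Φᵢ(A(Iᵢ(ρ)))` with `{Iᵢ}` a quantum instrument
(each `Iᵢ` CP, their sum trace preserving) and each `Φᵢ` a CPT map. -/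
def HasClassicalMemory {d : ℕ}
    (T : Matrix (Fin d) (Fin d) ℂ →
      (Matrix (Fin d) (Fin d) ℂ → Matrix (Fin d) (Fin d) ℂ) → Matrix (Fin d) (Fin d) ℂ) :
    Prop :=
  ∃ (k : ℕ) (I Φ : Fin k → (Matrix (Fin d) (Fin d) ℂ → Matrix (Fin d) (Fin d) ℂ)),
    (∀ i, IsLinearMap ℂ (I i)) ∧ (∀ i, IsCP (I i)) ∧ IsTP (fun ρ => ∑ i, I i ρ) ∧
    (∀ i, IsLinearMap ℂ (Φ i)) ∧ (∀ i, IsCP (Φ i)) ∧ (∀ i, IsTP (Φ i)) ∧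
    (∀ ρ A, T ρ A = ∑ i, Φ i (A (I i ρ)))

/-- Action of a Kraus operator on the first factor of a bipartite vector: `(L ⊗ I)ψ`. -/
def lact {m n : Type*} [Fintype m] (L : Matrix m m ℂ) (ψ : m × n → ℂ) : m × n → ℂ :=
  fun p => ∑ i, L p.1 i * ψ (i, p.2)

/-- Concurrence of a pure bipartite state: `C(ψ) = √(2(1 − tr((tr₂|ψ⟩⟨ψ|)²)))`. -/
def concPure {m n : Type*} [Fintype m] [Fintype n] (ψ : m × n → ℂ) : ℝ :=
  Real.sqrt (2 * (1 - purity (ptr₂ (outer ψ))))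

/-- The set of average values `Σₖ pₖ f(ψₖ)` over all pure-state decompositions of `ρ`. -/
def decompAvgs {m n : Type*} [Fintype m] [Fintype n]
    (f : (m × n → ℂ) → ℝ) (ρ : Matrix (m × n) (m × n) ℂ) : Set ℝ :=
  { r | ∃ (k : ℕ) (p : Fin k → ℝ) (ψ : Fin k → m × n → ℂ),
      (∀ i, 0 < p i) ∧ (∑ i, p i = 1) ∧ (∀ i, vnormSq (ψ i) = 1) ∧
      (ρ = ∑ i, (p i : ℂ) • outer (ψ i)) ∧ r = ∑ i, p i * f (ψ i) }

/-- An entanglement monotone: a nonnegative function of pure bipartite states whose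
average does not increase under local CP operations (given by Kraus operators) on the
system (first) factor. -/
def IsEntMonotone {m n : Type*} [Fintype m] [Fintype n] (f : (m × n → ℂ) → ℝ) : Prop :=
  (∀ ψ, 0 ≤ f ψ) ∧
  ∀ (k : ℕ) (L : Fin k → Matrix m m ℂ), (∑ j, (L j)ᴴ * L j) = 1 →
    ∀ ψ : m × n → ℂ, vnormSq ψ = 1 →
      (∑ j, if vnormSq (lact (L j) ψ) = 0 then 0 else
        vnormSq (lact (L j) ψ) *
          f (fun x => (((Real.sqrt (vnormSq (lact (L j) ψ)))⁻¹ : ℝ) : ℂ) * lact (L j) ψ x))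
        ≤ f ψ

end

/-!
Write the pair as `E₁ = Σₜ Kₜ · Kₜᴴ` and `E₂ = Σₜ Φₜ (Kₜ · Kₜᴴ)`. With `φₜ = (Kₜ ⊗ 1) Ψ⁺`, the
Choi state of `E₁` is `Σₜ |φₜ⟩⟨φₜ|` and that of `E₂` is `Σₜ (Φₜ ⊗ id) |φₜ⟩⟨φₜ|`; partial
transposition on the untouched factor commutes with `Φₜ ⊗ id`.

* Splitting each `|φₜ⟩⟨φₜ|^{T₂}` into positive and negative parts, the CPTP maps `Φₜ ⊗ id`
  cannot increase the trace norm, so `‖χ₂^{T₂}‖₁ ≤ Σₜ ‖|φₜ⟩⟨φₜ|^{T₂}‖₁`.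
* For a pure state with coefficient matrix `G`, `(|φ⟩⟨φ|^{T₂})² = (G Gᴴ) ⊗ (Gᴴ G)`, so
  `‖|φ⟩⟨φ|^{T₂}‖₁ = tr √(G Gᴴ) · tr √(Gᴴ G)`. Both factors have the same trace `q` and purity
  `p`, and Cauchy–Schwarz over the off-diagonal pairs of eigenvalues bounds each squared factor
  by `q + √(d(d-1)) √(q² - p)`.
* With `σₜ = tr₂ |φₜ⟩⟨φₜ|`, the vectors `(√(tr σₜ²), √((tr σₜ)² - tr σₜ²))` have length
  `tr σₜ`, which sums to `1`;
  Minkowski's inequality and the triangle inequality for the Frobenius norm of `Σₜ σₜ = tr₂ χ₁`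
  give `Σₜ √((tr σₜ)² - tr σₜ²) ≤ √(1 - tr (tr₂ χ₁)²)`.

Hence `‖χ₂^{T₂}‖₁ - 1 ≤ √(d(d-1)) √(1 - tr (tr₂ χ₁)²)`, the same holds for `χ₂^{T₁}` (the
transpose of `χ₂^{T₂}`), and `√(2/(d²(d²-1))) √(d(d-1)) ≤ √2` makes `Δ` vanish.
-/

section Scalar

open Finset

lemma sq_sum_eq_sum_sq_add_sum_offDiag {ι R : Type*} [Fintype ι] [DecidableEq ι] [CommSemiring R]
    (f : ι → R) : (∑ i, f i) ^ 2 = ∑ i, f i ^ 2 + ∑ p ∈ univ.offDiag, f p.1 * f p.2 := by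
  rw [sq, sum_mul_sum, ← sum_product', ← diag_union_offDiag,
    sum_union (disjoint_diag_offDiag _), sum_diag]
  simp only [sq]

lemma sq_sum_sqrt_le {ι : Type*} [Fintype ι] (μ : ι → ℝ) (hμ : ∀ i, 0 ≤ μ i) :
    (∑ i, √(μ i)) ^ 2 ≤ ∑ i, μ i +
      √((Fintype.card ι : ℝ) * (Fintype.card ι - 1)) * √((∑ i, μ i) ^ 2 - ∑ i, μ i ^ 2) := by
  classical
  have hcard : ((univ : Finset ι).offDiag.card : ℝ) = Fintype.card ι * (Fintype.card ι - 1) := by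
    rw [offDiag_card, card_univ, Nat.cast_sub (Nat.le_mul_self _)]
    push_cast
    ring
  have hcs := Real.sum_mul_le_sqrt_mul_sqrt (univ : Finset ι).offDiag (fun _ => 1)
    (fun p => √(μ p.1) * √(μ p.2))
  simp only [one_pow, sum_const, nsmul_eq_mul, mul_one, one_mul, mul_pow,
    Real.sq_sqrt (hμ _), hcard] at hcs
  rw [sq_sum_eq_sum_sq_add_sum_offDiag, sq_sum_eq_sum_sq_add_sum_offDiag μ, add_sub_cancel_left]
  simp only [Real.sq_sqrt (hμ _)]
  linarith

lemma sq_sum_add_sq_sum_le_sq_sum_sqrt {ι : Type*} [Fintype ι] (a b : ι → ℝ) :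
    (∑ i, a i) ^ 2 + (∑ i, b i) ^ 2 ≤ (∑ i, √(a i ^ 2 + b i ^ 2)) ^ 2 := by
  have hz : ‖∑ i, (⟨a i, b i⟩ : ℂ)‖ ≤ ∑ i, ‖(⟨a i, b i⟩ : ℂ)‖ := norm_sum_le _ _
  simp only [Complex.norm_def, Complex.normSq_mk, ← sq] at hz
  have := pow_le_pow_left₀ (Real.sqrt_nonneg _) hz 2
  rwa [Real.sq_sqrt (Complex.normSq_nonneg _), Complex.normSq_apply, Complex.re_sum,
    Complex.im_sum, ← sq, ← sq] at this

end Scalar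

section Spectral

open scoped MatrixOrder

variable {n : Type*} [Fintype n] [DecidableEq n]

lemma Matrix.IsHermitian.trace_cfc {A : Matrix n n ℂ} (hA : A.IsHermitian) (f : ℝ → ℝ) :
    (cfc f A).trace = ∑ i, (f (hA.eigenvalues i) : ℂ) := by
  rw [hA.cfc_eq, IsHermitian.cfc, Unitary.conjStarAlgAut_apply, trace_mul_cycle,
    Unitary.coe_star_mul_self, one_mul, trace_diagonal]
  rfl

lemma Matrix.IsHermitian.re_trace_eq_sum_eigenvalues {A : Matrix n n ℂ} (hA : A.IsHermitian) :
    A.trace.re = ∑ i, hA.eigenvalues i := by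
  simp [hA.trace_eq_sum_eigenvalues]

lemma Matrix.IsHermitian.purity_eq_sum_eigenvalues_sq {A : Matrix n n ℂ} (hA : A.IsHermitian) :
    purity A = ∑ i, hA.eigenvalues i ^ 2 := by
  have hsq : A * A = cfc (fun x : ℝ => x ^ 2) A := by
    rw [cfc_pow_id A 2 hA.isSelfAdjoint, sq]
  rw [purity, hsq, hA.trace_cfc, ← Complex.ofReal_sum, Complex.ofReal_re]

lemma Matrix.IsHermitian.purity_nonneg {A : Matrix n n ℂ} (hA : A.IsHermitian) :
    0 ≤ purity A := by
  rw [hA.purity_eq_sum_eigenvalues_sq]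
  positivity

lemma Matrix.PosSemidef.purity_le_sq_trace {A : Matrix n n ℂ} (hA : A.PosSemidef) :
    purity A ≤ A.trace.re ^ 2 := by
  rw [hA.1.re_trace_eq_sum_eigenvalues, hA.1.purity_eq_sum_eigenvalues_sq]
  exact Finset.sum_sq_le_sq_sum_of_nonneg fun i _ => hA.eigenvalues_nonneg i

lemma Matrix.PosSemidef.sq_sum_sqrt_eigenvalues_le {A : Matrix n n ℂ} (hA : A.PosSemidef) :
    (∑ i, √(hA.1.eigenvalues i)) ^ 2 ≤ A.trace.re +
      √((Fintype.card n : ℝ) * (Fintype.card n - 1)) * √(A.trace.re ^ 2 - purity A) := by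
  rw [hA.1.re_trace_eq_sum_eigenvalues, hA.1.purity_eq_sum_eigenvalues_sq]
  exact sq_sum_sqrt_le _ hA.eigenvalues_nonneg

lemma Matrix.PosSemidef.sqrt_eq_cfcSqrt {A : Matrix n n ℂ} (hA : A.PosSemidef) :
    hA.sqrt = CFC.sqrt A := by
  rw [CFC.sqrt_eq_real_sqrt A hA.nonneg, cfcₙ_eq_cfc, hA.1.cfc_eq]
  rfl

lemma Matrix.PosSemidef.trace_sqrt {A : Matrix n n ℂ} (hA : A.PosSemidef) :
    (CFC.sqrt A).trace = ∑ i, (√(hA.1.eigenvalues i) : ℂ) := by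
  rw [CFC.sqrt_eq_real_sqrt A hA.nonneg, cfcₙ_eq_cfc, hA.1.trace_cfc]

end Spectral

lemma purity_mul_comm {m n : Type*} [Fintype m] [Fintype n] (A : Matrix m n ℂ)
    (B : Matrix n m ℂ) : purity (A * B) = purity (B * A) := by
  rw [purity, purity, Matrix.mul_assoc, trace_mul_comm]
  simp only [Matrix.mul_assoc]

section Frobenius

attribute [local instance] Matrix.frobeniusNormedAddCommGroup

variable {n : Type*} [Fintype n]

lemma Matrix.IsHermitian.purity_eq_frobenius_norm_sq {A : Matrix n n ℂ} (hA : A.IsHermitian) :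
    purity A = ‖A‖ ^ 2 := by
  rw [frobenius_norm_def, ← Real.sqrt_eq_rpow, Real.sq_sqrt (by positivity)]
  simp only [purity, trace, diag_apply, mul_apply, Complex.re_sum, Real.rpow_two]
  refine Finset.sum_congr rfl fun i _ => Finset.sum_congr rfl fun j _ => ?_
  rw [← hA.apply i j, norm_star, mul_comm, RCLike.star_def, Complex.mul_conj, Complex.ofReal_re,
    Complex.normSq_eq_norm_sq]

lemma purity_sum_le {ι : Type*} (s : Finset ι) {σ : ι → Matrix n n ℂ}
    (hσ : ∀ t ∈ s, (σ t).IsHermitian) :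
    purity (∑ t ∈ s, σ t) ≤ (∑ t ∈ s, √(purity (σ t))) ^ 2 := by
  calc purity (∑ t ∈ s, σ t) = ‖∑ t ∈ s, σ t‖ ^ 2 :=
        (isSelfAdjoint_sum s hσ).isHermitian.purity_eq_frobenius_norm_sq
    _ ≤ (∑ t ∈ s, ‖σ t‖) ^ 2 := by gcongr; exact norm_sum_le _ _
    _ = (∑ t ∈ s, √(purity (σ t))) ^ 2 := by
        congr 1
        refine Finset.sum_congr rfl fun t ht => ?_
        rw [(hσ t ht).purity_eq_frobenius_norm_sq, Real.sqrt_sq (norm_nonneg _)]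

lemma sum_sqrt_sq_trace_sub_purity_le [DecidableEq n] {ι : Type*} [Fintype ι]
    {σ : ι → Matrix n n ℂ} (hσ : ∀ t, (σ t).PosSemidef) (htrace : ∑ t, (σ t).trace.re = 1) :
    ∑ t, √((σ t).trace.re ^ 2 - purity (σ t)) ≤ √(1 - purity (∑ t, σ t)) := by
  have hmix := sq_sum_add_sq_sum_le_sq_sum_sqrt (fun t => √(purity (σ t)))
    fun t => √((σ t).trace.re ^ 2 - purity (σ t))
  simp only [Real.sq_sqrt (hσ _).1.purity_nonneg,
    Real.sq_sqrt (sub_nonneg.2 (hσ _).purity_le_sq_trace), add_sub_cancel,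
    Real.sqrt_sq (Complex.nonneg_iff.mp (hσ _).trace_nonneg).1, htrace] at hmix
  exact Real.le_sqrt_of_sq_le (by linarith [purity_sum_le Finset.univ fun t _ => (hσ t).1])

end Frobenius

section TraceNorm

open scoped MatrixOrder

variable {n : Type*} [Fintype n] [DecidableEq n]

lemma traceNorm_eq_of_mul_self_eq {A S : Matrix n n ℂ} (hS : S.PosSemidef) (h : S * S = Aᴴ * A) :
    traceNorm A = S.trace.re := by
  rw [traceNorm, PosSemidef.sqrt_eq_cfcSqrt, CFC.sqrt_unique h hS.nonneg]

lemma Matrix.IsHermitian.traceNorm_eq_sum_abs_eigenvalues {A : Matrix n n ℂ}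
    (hA : A.IsHermitian) : traceNorm A = ∑ i, |hA.eigenvalues i| := by
  have hS : (cfc (|·| : ℝ → ℝ) A).PosSemidef :=
    (cfc_nonneg fun (x : ℝ) _ => abs_nonneg x).posSemidef
  have h : cfc (|·| : ℝ → ℝ) A * cfc (|·| : ℝ → ℝ) A = Aᴴ * A := by
    rw [← cfc_mul .., hA.eq, ← sq, ← cfc_pow_id (R := ℝ) A 2 hA.isSelfAdjoint]
    simp only [abs_mul_abs_self, sq]
  rw [traceNorm_eq_of_mul_self_eq hS h, hA.trace_cfc]
  simp

lemma Matrix.IsHermitian.traceNorm_transpose {A : Matrix n n ℂ} (hA : A.IsHermitian) :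
    traceNorm Aᵀ = traceNorm A := by
  have hB := posSemidef_conjTranspose_mul_self A
  have h : (CFC.sqrt (Aᴴ * A))ᵀ * (CFC.sqrt (Aᴴ * A))ᵀ = (Aᵀ)ᴴ * Aᵀ := by
    rw [← transpose_mul, CFC.sqrt_mul_sqrt_self _ hB.nonneg, hA.eq, transpose_mul,
      hA.transpose.eq]
  rw [traceNorm_eq_of_mul_self_eq (CFC.sqrt_nonneg _).posSemidef.transpose h, trace_transpose,
    traceNorm, PosSemidef.sqrt_eq_cfcSqrt]

lemma Matrix.IsHermitian.traceNorm_le_of_eq_sub {A P Q : Matrix n n ℂ} (hA : A.IsHermitian)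
    (hP : P.PosSemidef) (hQ : Q.PosSemidef) (h : A = P - Q) :
    traceNorm A ≤ P.trace.re + Q.trace.re := by
  -- In the eigenbasis of `A`, each eigenvalue is a difference of nonnegative diagonal entries.
  let C := Unitary.conjStarAlgAut ℂ (Matrix n n ℂ) (star hA.eigenvectorUnitary)
  have hC : ∀ X, C X = (hA.eigenvectorUnitary : Matrix n n ℂ)ᴴ * X * hA.eigenvectorUnitary :=
    fun X => Unitary.conjStarAlgAut_star_apply _ X
  have htrace : ∀ X, (C X).trace = X.trace := fun X => by
    rw [hC, trace_mul_cycle, ← star_eq_conjTranspose,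
      Unitary.mul_star_self_of_mem hA.eigenvectorUnitary.2, one_mul]
  have hdiag : ∀ {X : Matrix n n ℂ}, X.PosSemidef → ∀ i, 0 ≤ (C X i i).re := fun hX i => by
    rw [hC]
    exact (Complex.nonneg_iff.mp (hX.conjTranspose_mul_mul_same _).diag_nonneg).1
  have heig : ∀ i, hA.eigenvalues i = (C P i i).re - (C Q i i).re := fun i => by
    have hCA : C A i i = hA.eigenvalues i := by
      simp [C, hA.conjStarAlgAut_star_eigenvectorUnitary]
    rw [← Complex.ofReal_re (hA.eigenvalues i), ← hCA, h, map_sub, sub_apply,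
      Complex.sub_re]
  rw [hA.traceNorm_eq_sum_abs_eigenvalues, ← htrace P, ← htrace Q, trace, trace, Complex.re_sum,
    Complex.re_sum, ← Finset.sum_add_distrib]
  simp only [diag_apply]
  refine Finset.sum_le_sum fun i _ => abs_le.mpr ⟨?_, ?_⟩ <;>
    linarith [heig i, hdiag hP i, hdiag hQ i]

lemma Matrix.IsHermitian.exists_traceNorm_eq_trace_add_trace {A : Matrix n n ℂ}
    (hA : A.IsHermitian) : ∃ P Q : Matrix n n ℂ, P.PosSemidef ∧ Q.PosSemidef ∧ A = P - Q ∧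
      traceNorm A = P.trace.re + Q.trace.re := by
  refine ⟨cfc (·⁺) A, cfc (·⁻) A, (cfc_nonneg fun (x : ℝ) _ => posPart_nonneg x).posSemidef,
    (cfc_nonneg fun (x : ℝ) _ => negPart_nonneg x).posSemidef, ?_, ?_⟩
  · rw [← cfc_sub (fun x : ℝ => x⁺) (fun x : ℝ => x⁻) A]
    simp only [posPart_sub_negPart]
    exact (cfc_id' ℝ A).symm
  · simp [hA.traceNorm_eq_sum_abs_eigenvalues, hA.trace_cfc, ← Finset.sum_add_distrib,
      posPart_add_negPart]

lemma traceNorm_eq_mul_of_conjTranspose_mul_self_eq_kronecker {m : Type*} [Fintype m]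
    [DecidableEq m] {M : Matrix (m × n) (m × n) ℂ} {B : Matrix m m ℂ} {C : Matrix n n ℂ}
    (hB : B.PosSemidef) (hC : C.PosSemidef) (h : Mᴴ * M = B ⊗ₖ C) :
    traceNorm M = (∑ i, √(hB.1.eigenvalues i)) * ∑ j, √(hC.1.eigenvalues j) := by
  have hS : (CFC.sqrt B ⊗ₖ CFC.sqrt C).PosSemidef :=
    (CFC.sqrt_nonneg B).posSemidef.kronecker (CFC.sqrt_nonneg C).posSemidef
  have hS2 : (CFC.sqrt B ⊗ₖ CFC.sqrt C) * (CFC.sqrt B ⊗ₖ CFC.sqrt C) = Mᴴ * M := by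
    rw [← mul_kronecker_mul, CFC.sqrt_mul_sqrt_self B hB.nonneg,
      CFC.sqrt_mul_sqrt_self C hC.nonneg, h]
  rw [traceNorm_eq_of_mul_self_eq hS hS2, trace_kronecker, hB.trace_sqrt, hC.trace_sqrt,
    ← Complex.ofReal_sum, ← Complex.ofReal_sum, ← Complex.ofReal_mul, Complex.ofReal_re]

end TraceNorm

def coeffMatrix {m n : Type*} (ψ : m × n → ℂ) : Matrix m n ℂ := Matrix.of fun i j => ψ (i, j)

lemma outer_isHermitian {N : Type*} (ψ : N → ℂ) : (outer ψ).IsHermitian := by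
  ext i j
  simp [outer, mul_comm]

lemma outer_posSemidef {N : Type*} [Fintype N] (ψ : N → ℂ) : (outer ψ).PosSemidef :=
  posSemidef_vecMulVec_self_star ψ

lemma pt₂_isHermitian {m n : Type*} {X : Matrix (m × n) (m × n) ℂ} (hX : X.IsHermitian) :
    (pt₂ X).IsHermitian := by
  ext p q
  exact congr_fun (congr_fun hX.eq (p.1, q.2)) (q.1, p.2)

lemma pt₁_eq_transpose_pt₂ {m n : Type*} (X : Matrix (m × n) (m × n) ℂ) : pt₁ X = (pt₂ X)ᵀ :=
  rfl

lemma traceNorm_pt₁_eq_traceNorm_pt₂ {m n : Type*} [Fintype m] [DecidableEq m] [Fintype n]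
    [DecidableEq n] {X : Matrix (m × n) (m × n) ℂ} (hX : X.IsHermitian) :
    traceNorm (pt₁ X) = traceNorm (pt₂ X) := by
  rw [pt₁_eq_transpose_pt₂, (pt₂_isHermitian hX).traceNorm_transpose]

lemma pt₂_sum {ι m n : Type*} (s : Finset ι) (X : ι → Matrix (m × n) (m × n) ℂ) :
    pt₂ (∑ t ∈ s, X t) = ∑ t ∈ s, pt₂ (X t) := by
  ext p q
  simp [pt₂, Matrix.sum_apply]

lemma ptr₂_sum {ι m n : Type*} [Fintype n] (s : Finset ι) (X : ι → Matrix (m × n) (m × n) ℂ) :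
    ptr₂ (∑ t ∈ s, X t) = ∑ t ∈ s, ptr₂ (X t) := by
  ext i k
  simp [ptr₂, Matrix.sum_apply, Finset.sum_comm (s := s)]

lemma ptr₂_outer {m n : Type*} [Fintype n] (ψ : m × n → ℂ) :
    ptr₂ (outer ψ) = coeffMatrix ψ * (coeffMatrix ψ)ᴴ := by
  ext i k
  simp [ptr₂, outer, coeffMatrix, mul_apply]

lemma pt₂_outer_mul_self {m n : Type*} [Fintype m] [Fintype n] (ψ : m × n → ℂ) :
    pt₂ (outer ψ) * pt₂ (outer ψ) =
      (coeffMatrix ψ * (coeffMatrix ψ)ᴴ) ⊗ₖ ((coeffMatrix ψ)ᴴ * coeffMatrix ψ) := by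
  ext ⟨i, j⟩ ⟨k, l⟩
  simp only [pt₂, outer, coeffMatrix, mul_apply, kroneckerMap_apply, conjTranspose_apply,
    of_apply, Fintype.sum_prod_type, Finset.sum_mul_sum]
  rw [Finset.sum_comm]
  refine Finset.sum_congr rfl fun b _ => Finset.sum_congr rfl fun a _ => ?_
  simp only [RCLike.star_def]
  ring

lemma traceNorm_pt₂_outer_le {n : Type*} [Fintype n] [DecidableEq n] (ψ : n × n → ℂ) :
    traceNorm (pt₂ (outer ψ)) ≤ (ptr₂ (outer ψ)).trace.re +
      √((Fintype.card n : ℝ) * (Fintype.card n - 1)) *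
        √((ptr₂ (outer ψ)).trace.re ^ 2 - purity (ptr₂ (outer ψ))) := by
  set G := coeffMatrix ψ
  have hGG := posSemidef_self_mul_conjTranspose G
  have hGG' := posSemidef_conjTranspose_mul_self G
  have hM : (pt₂ (outer ψ))ᴴ * pt₂ (outer ψ) = (G * Gᴴ) ⊗ₖ (Gᴴ * G) := by
    rw [(pt₂_isHermitian (outer_isHermitian ψ)).eq, pt₂_outer_mul_self]
  have hx := hGG.sq_sum_sqrt_eigenvalues_le
  have hy := hGG'.sq_sum_sqrt_eigenvalues_le
  rw [trace_mul_comm, purity_mul_comm] at hy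
  rw [ptr₂_outer, traceNorm_eq_mul_of_conjTranspose_mul_self_eq_kronecker hGG hGG' hM]
  linarith [two_mul_le_add_sq (∑ i, √(hGG.1.eigenvalues i)) (∑ j, √(hGG'.1.eigenvalues j))]

section ChannelExtension

variable {s : Type*}

lemma tensExtA_id {n : Type*} (X : Matrix (s × n) (s × n) ℂ) : tensExtA (fun ρ => ρ) X = X :=
  rfl

lemma pt₂_tensExtA {n : Type*} (Φ : Matrix s s ℂ → Matrix s s ℂ)
    (X : Matrix (s × n) (s × n) ℂ) : pt₂ (tensExtA Φ X) = tensExtA Φ (pt₂ X) :=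
  rfl

lemma tensExtA_sub {n : Type*} {Φ : Matrix s s ℂ → Matrix s s ℂ} (hΦ : IsLinearMap ℂ Φ)
    (X Y : Matrix (s × n) (s × n) ℂ) : tensExtA Φ (X - Y) = tensExtA Φ X - tensExtA Φ Y := by
  ext p q
  exact congr_fun (congr_fun ((IsLinearMap.mk' Φ hΦ).map_sub
    (of fun i k => X (i, p.2) (k, q.2)) (of fun i k => Y (i, p.2) (k, q.2))) p.1) q.1

lemma trace_tensExtA [Fintype s] {n : Type*} [Fintype n] {Φ : Matrix s s ℂ → Matrix s s ℂ}
    (hΦ : IsTP Φ) (X : Matrix (s × n) (s × n) ℂ) : (tensExtA Φ X).trace = X.trace := by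
  have hslice : ∀ Y : Matrix (s × n) (s × n) ℂ,
      Y.trace = ∑ b, (Matrix.of fun i k => Y (i, b) (k, b)).trace := fun Y => by
    simp only [trace, diag_apply, of_apply, Fintype.sum_prod_type]
    exact Finset.sum_comm
  rw [hslice, hslice X]
  exact Finset.sum_congr rfl fun b _ => hΦ (of fun i k => X (i, b) (k, b))

lemma tensExtA_comp_conj_outer [Fintype s] {n : Type*} (Φ : Matrix s s ℂ → Matrix s s ℂ)
    (K : Matrix s s ℂ) (ψ : s × n → ℂ) :
    tensExtA (fun ρ => Φ (K * ρ * Kᴴ)) (outer ψ) = tensExtA Φ (outer (lact K ψ)) := by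
  ext p q
  simp only [tensExtA, of_apply]
  congr 2
  ext i k
  simp only [outer, lact, mul_apply, conjTranspose_apply, of_apply, star_sum, star_mul',
    Finset.sum_mul, Finset.mul_sum]
  exact Finset.sum_congr rfl fun x _ => Finset.sum_congr rfl fun y _ => by ring

lemma tensExtA_sum {ι n : Type*} [Fintype ι] (Φ : ι → Matrix s s ℂ → Matrix s s ℂ)
    (X : Matrix (s × n) (s × n) ℂ) :
    tensExtA (fun ρ => ∑ t, Φ t ρ) X = ∑ t, tensExtA (Φ t) X := by
  ext p q
  simp [tensExtA, Matrix.sum_apply]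

lemma traceNorm_sum_tensExtA_le [Fintype s] [DecidableEq s] {ι : Type*} [Fintype ι] {n : ℕ}
    {Φ : ι → Matrix s s ℂ → Matrix s s ℂ} (hlin : ∀ t, IsLinearMap ℂ (Φ t))
    (hCP : ∀ t, IsCP (Φ t)) (hTP : ∀ t, IsTP (Φ t))
    {X : ι → Matrix (s × Fin n) (s × Fin n) ℂ} (hX : ∀ t, (X t).IsHermitian) :
    traceNorm (∑ t, tensExtA (Φ t) (X t)) ≤ ∑ t, traceNorm (X t) := by
  choose P Q hP hQ hPQ hnorm using fun t => (hX t).exists_traceNorm_eq_trace_add_trace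
  have hsplit : ∑ t, tensExtA (Φ t) (X t) =
      ∑ t, tensExtA (Φ t) (P t) - ∑ t, tensExtA (Φ t) (Q t) := by
    rw [← Finset.sum_sub_distrib]
    exact Finset.sum_congr rfl fun t _ => by rw [hPQ t, tensExtA_sub (hlin t)]
  have hP' := posSemidef_sum Finset.univ fun t _ => hCP t n (P t) (hP t)
  have hQ' := posSemidef_sum Finset.univ fun t _ => hCP t n (Q t) (hQ t)
  have hre : ∀ Y : ι → Matrix (s × Fin n) (s × Fin n) ℂ,
      (∑ t, tensExtA (Φ t) (Y t)).trace.re = ∑ t, (Y t).trace.re := fun Y => by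
    simp only [trace_sum, Complex.re_sum, trace_tensExtA (hTP _)]
  calc traceNorm (∑ t, tensExtA (Φ t) (X t))
      ≤ (∑ t, tensExtA (Φ t) (P t)).trace.re + (∑ t, tensExtA (Φ t) (Q t)).trace.re :=
        (hsplit ▸ hP'.1.sub hQ'.1).traceNorm_le_of_eq_sub hP' hQ' hsplit
    _ = ∑ t, traceNorm (X t) := by
        rw [hre, hre, ← Finset.sum_add_distrib]
        exact Finset.sum_congr rfl fun t _ => (hnorm t).symm

end ChannelExtension

section Choi

variable {d k : ℕ}

lemma choiMap_kraus (K : Fin k → Matrix (Fin d) (Fin d) ℂ)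
    (Φ : Fin k → Matrix (Fin d) (Fin d) ℂ → Matrix (Fin d) (Fin d) ℂ) :
    ChoiMap (fun ρ => ∑ t, Φ t (K t * ρ * (K t)ᴴ)) =
      ∑ t, tensExtA (Φ t) (outer (lact (K t) (maxEntVec d))) := by
  rw [ChoiMap, tensExtA_sum]
  exact Finset.sum_congr rfl fun t _ => tensExtA_comp_conj_outer _ _ _

lemma posSemidef_choiMap_kraus (K : Fin k → Matrix (Fin d) (Fin d) ℂ)
    {Φ : Fin k → Matrix (Fin d) (Fin d) ℂ → Matrix (Fin d) (Fin d) ℂ} (hCP : ∀ t, IsCP (Φ t)) :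
    (ChoiMap (fun ρ => ∑ t, Φ t (K t * ρ * (K t)ᴴ))).PosSemidef := by
  rw [choiMap_kraus]
  exact posSemidef_sum _ fun t _ => hCP t d _ (outer_posSemidef _)

lemma ptr₂_choiMap_kraus (K : Fin k → Matrix (Fin d) (Fin d) ℂ) :
    ptr₂ (ChoiMap fun ρ => ∑ t, K t * ρ * (K t)ᴴ) =
      ∑ t, ptr₂ (outer (lact (K t) (maxEntVec d))) := by
  rw [choiMap_kraus K fun _ ρ => ρ]
  simp only [tensExtA_id, ptr₂_sum]

lemma trace_ptr₂_outer_lact_maxEntVec (K : Matrix (Fin d) (Fin d) ℂ) :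
    (ptr₂ (outer (lact K (maxEntVec d)))).trace = (d : ℂ)⁻¹ * (Kᴴ * K).trace := by
  have hcoeff : coeffMatrix (lact K (maxEntVec d)) = (((√d)⁻¹ : ℝ) : ℂ) • K := by
    ext i j
    simp [coeffMatrix, lact, maxEntVec, mul_comm]
  rw [ptr₂_outer, hcoeff, conjTranspose_smul, smul_mul_smul_comm, trace_smul, trace_mul_comm,
    smul_eq_mul]
  congr 1
  simp [← Complex.ofReal_mul, ← mul_inv, Real.mul_self_sqrt (Nat.cast_nonneg d)]

lemma sum_re_trace_ptr₂_outer_lact_maxEntVec (hd : 0 < d) {K : Fin k → Matrix (Fin d) (Fin d) ℂ}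
    (hK : ∑ t, (K t)ᴴ * K t = 1) :
    ∑ t, (ptr₂ (outer (lact (K t) (maxEntVec d)))).trace.re = 1 := by
  rw [← Complex.re_sum]
  simp only [trace_ptr₂_outer_lact_maxEntVec]
  rw [← Finset.mul_sum, ← trace_sum, hK, trace_one, Fintype.card_fin,
    inv_mul_cancel₀ (Nat.cast_ne_zero.2 hd.ne'), Complex.one_re]

theorem traceNorm_pt₂_choiMap_le (hd : 0 < d) {K : Fin k → Matrix (Fin d) (Fin d) ℂ}
    {Φ : Fin k → Matrix (Fin d) (Fin d) ℂ → Matrix (Fin d) (Fin d) ℂ}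
    (hK : ∑ t, (K t)ᴴ * K t = 1) (hlin : ∀ t, IsLinearMap ℂ (Φ t)) (hCP : ∀ t, IsCP (Φ t))
    (hTP : ∀ t, IsTP (Φ t)) :
    traceNorm (pt₂ (ChoiMap fun ρ => ∑ t, Φ t (K t * ρ * (K t)ᴴ))) ≤
      1 + √((d : ℝ) * (d - 1)) *
        √(1 - purity (ptr₂ (ChoiMap fun ρ => ∑ t, K t * ρ * (K t)ᴴ))) := by
  set σ := fun t => ptr₂ (outer (lact (K t) (maxEntVec d)))
  have hσ : ∀ t, (σ t).PosSemidef := fun t => by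
    simp only [σ, ptr₂_outer]
    exact posSemidef_self_mul_conjTranspose _
  have htrace : ∑ t, (σ t).trace.re = 1 := sum_re_trace_ptr₂_outer_lact_maxEntVec hd hK
  have hchoi : traceNorm (pt₂ (ChoiMap fun ρ => ∑ t, Φ t (K t * ρ * (K t)ᴴ))) ≤
      ∑ t, traceNorm (pt₂ (outer (lact (K t) (maxEntVec d)))) := by
    rw [choiMap_kraus, pt₂_sum]
    simp only [pt₂_tensExtA]
    exact traceNorm_sum_tensExtA_le hlin hCP hTP fun t => pt₂_isHermitian (outer_isHermitian _)
  have hterm : ∀ t, traceNorm (pt₂ (outer (lact (K t) (maxEntVec d)))) ≤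
      (σ t).trace.re + √((d : ℝ) * (d - 1)) * √((σ t).trace.re ^ 2 - purity (σ t)) :=
    fun t => by simpa using traceNorm_pt₂_outer_le (lact (K t) (maxEntVec d))
  calc _ ≤ ∑ t, ((σ t).trace.re + √((d : ℝ) * (d - 1)) * √((σ t).trace.re ^ 2 - purity (σ t))) :=
        hchoi.trans (Finset.sum_le_sum fun t _ => hterm t)
    _ = 1 + √((d : ℝ) * (d - 1)) * ∑ t, √((σ t).trace.re ^ 2 - purity (σ t)) := by
        rw [Finset.sum_add_distrib, htrace, Finset.mul_sum]
    _ ≤ _ := by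
        rw [ptr₂_choiMap_kraus]
        gcongr
        exact sum_sqrt_sq_trace_sub_purity_le hσ htrace

end Choi

lemma sqrt_two_div_mul_sub_one_le {d : ℕ} {T R : ℝ}
    (h : T ≤ 1 + √((d : ℝ) * (d - 1)) * √(1 - R)) :
    √(2 / ((d : ℝ) ^ 2 * ((d : ℝ) ^ 2 - 1))) * (T - 1) ≤ √(2 * (1 - R)) := by
  rcases Nat.eq_zero_or_pos d with rfl | hpos
  · simp [Real.sqrt_nonneg]
  have hd1 : (1 : ℝ) ≤ d := Nat.one_le_cast.2 hpos
  have hd : (0 : ℝ) ≤ d * (d - 1) := by nlinarith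
  have hprefactor : √(2 / ((d : ℝ) ^ 2 * ((d : ℝ) ^ 2 - 1))) * √((d : ℝ) * (d - 1)) ≤ √2 := by
    rw [← Real.sqrt_mul (div_nonneg zero_le_two (by nlinarith))]
    refine Real.sqrt_le_sqrt ?_
    rw [div_mul_eq_mul_div]
    refine div_le_of_le_mul₀ (by nlinarith) zero_le_two ?_
    nlinarith [mul_le_mul_of_nonneg_left (show (1 : ℝ) ≤ d * (d + 1) by nlinarith) hd]
  calc √(2 / ((d : ℝ) ^ 2 * ((d : ℝ) ^ 2 - 1))) * (T - 1)
      ≤ √(2 / ((d : ℝ) ^ 2 * ((d : ℝ) ^ 2 - 1))) * √((d : ℝ) * (d - 1)) * √(1 - R) := by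
        rw [mul_assoc]
        gcongr
        linarith
    _ ≤ √2 * √(1 - R) := by gcongr
    _ = √(2 * (1 - R)) := (Real.sqrt_mul zero_le_two _).symm

theorem stmt18_general {d : ℕ} (hd : 0 < d)
    (E₁ E₂ : Matrix (Fin d) (Fin d) ℂ → Matrix (Fin d) (Fin d) ℂ)
    (hΔ : 0 < max 0 (Real.sqrt (2 / (((d : ℝ) ^ 2) * ((d : ℝ) ^ 2 - 1))) *
        max (traceNorm (pt₁ (ChoiMap E₂)) - 1) (traceNorm (pt₂ (ChoiMap E₂)) - 1)
      - Real.sqrt (2 * (1 - purity (ptr₂ (ChoiMap E₁)))))) :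
    ¬ ∃ (k : ℕ) (K : Fin k → Matrix (Fin d) (Fin d) ℂ)
        (Φ : Fin k → (Matrix (Fin d) (Fin d) ℂ → Matrix (Fin d) (Fin d) ℂ)),
      (∑ i, (K i)ᴴ * K i = 1) ∧ (∀ i, IsLinearMap ℂ (Φ i)) ∧ (∀ i, IsCP (Φ i)) ∧
      (∀ i, IsTP (Φ i)) ∧
      (∀ ρ, E₁ ρ = ∑ i, K i * ρ * (K i)ᴴ) ∧
      (∀ ρ, E₂ ρ = ∑ i, Φ i (K i * ρ * (K i)ᴴ)) := by
  rintro ⟨k, K, Φ, hK, hlin, hCP, hTP, hE₁, hE₂⟩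
  obtain rfl : E₁ = fun ρ => ∑ i, K i * ρ * (K i)ᴴ := funext hE₁
  obtain rfl : E₂ = fun ρ => ∑ i, Φ i (K i * ρ * (K i)ᴴ) := funext hE₂
  rw [traceNorm_pt₁_eq_traceNorm_pt₂ (posSemidef_choiMap_kraus K hCP).1, max_self] at hΔ
  have hwitness := sqrt_two_div_mul_sub_one_le (traceNorm_pt₂_choiMap_le hd hK hlin hCP hTP)
  rw [max_eq_left (sub_nonpos.2 hwitness)] at hΔ
  exact hΔ.false

/-- combined map-based witness: if `Δ(t₁,t₂) > 0` (built from the Choi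
states of the two maps via the PPT lower bound and the purity upper bound), then the
pair of channels is not realizable with classical memory. -/
theorem stmt18 {d : ℕ} (hd : 0 < d)
    (E₁ E₂ : Matrix (Fin d) (Fin d) ℂ → Matrix (Fin d) (Fin d) ℂ)
    (h₁ : IsLinearMap ℂ E₁ ∧ IsCP E₁ ∧ IsTP E₁)
    (h₂ : IsLinearMap ℂ E₂ ∧ IsCP E₂ ∧ IsTP E₂)
    (hΔ : 0 < max 0 (Real.sqrt (2 / (((d : ℝ) ^ 2) * ((d : ℝ) ^ 2 - 1))) *
        max (traceNorm (pt₁ (ChoiMap E₂)) - 1) (traceNorm (pt₂ (ChoiMap E₂)) - 1)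
      - Real.sqrt (2 * (1 - purity (ptr₂ (ChoiMap E₁)))))) :
    ¬ ∃ (k : ℕ) (K : Fin k → Matrix (Fin d) (Fin d) ℂ)
        (Φ : Fin k → (Matrix (Fin d) (Fin d) ℂ → Matrix (Fin d) (Fin d) ℂ)),
      (∑ i, (K i)ᴴ * K i = 1) ∧ (∀ i, IsLinearMap ℂ (Φ i)) ∧ (∀ i, IsCP (Φ i)) ∧
      (∀ i, IsTP (Φ i)) ∧
      (∀ ρ, E₁ ρ = ∑ i, K i * ρ * (K i)ᴴ) ∧
      (∀ ρ, E₂ ρ = ∑ i, Φ i (K i * ρ * (K i)ᴴ)) :=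
  stmt18_general hd E₁ E₂ hΔ
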